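/- With the degree function d on GL_n(ℤ) defined via reduced stochastic log-matrices, d(g) = 1 if and only if g lies in the embedded copy of S_{n+1} (the subgroup of GL_n(ℤ) induced by coordinate permutations of ℤ^{n+1} acting on Λ₀). In particular, for g outside this subgroup, d(g) ≥ 2. -/

import Mathlib

/-!
The columns of `Mg g` sum to zero and its zeroth column vanishes, so every row term
`max(0, -minⱼ Mᵢⱼ)` of `d(g)` is a nonnegative integer. If `d(g) ≤ 1`, all rows but one, `i₀`,
are nonnegative and row `i₀` is `≥ -1`; a zero-sum integer column with this sign pattern is
`e_c - e_{i₀}`. So column `j` of `Mg g` is `e_{f j} - e_{f 0}`, and since the columns of an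
invertible `g` are distinct and nonzero, `f` is injective: it is a permutation `σ`, and
`g = permMat σ`. Conversely the columns of `Mg (permMat σ)` are `e_{σ j} - e_{σ 0}`, whose only
negative row is `σ 0`, so `d(permMat σ) = 1`.
-/

/-- The (n+1)×(n+1) zero-column-sum extension of an n×n integer matrix g. -/
def Mg {n : ℕ} (g : Matrix (Fin n) (Fin n) ℤ) : Matrix (Fin (n + 1)) (Fin (n + 1)) ℤ :=
  Matrix.of fun i j =>
    if hj : j.val = 0 then 0
    else if hi : i.val = 0 then
      -∑ k : Fin n, g k ⟨j.val - 1, by have := j.isLt; omega⟩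
    else g ⟨i.val - 1, by have := i.isLt; omega⟩ ⟨j.val - 1, by have := j.isLt; omega⟩

/-- The degree of the monomial Cremona transformation associated to g. -/
def cremonaDeg {n : ℕ} (g : Matrix (Fin n) (Fin n) ℤ) : ℤ :=
  ∑ i : Fin (n + 1), max 0 (-(Finset.univ.inf' Finset.univ_nonempty (Mg g i)))

/-- The matrix of the automorphism of Λ₀ induced by a permutation σ of the n+1
coordinates, in the basis (e₁−e₀, …, eₙ−e₀). -/
def permMat {n : ℕ} (σ : Equiv.Perm (Fin (n + 1))) : Matrix (Fin n) (Fin n) ℤ :=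
  Matrix.of fun i j =>
    (if σ j.succ = i.succ then 1 else 0) - (if σ 0 = i.succ then 1 else 0)

open Finset

section IntVectors

variable {ι : Type*} [Fintype ι] [DecidableEq ι]

theorem exists_eq_single_of_sum_eq_one {w : ι → ℤ} (hw : 0 ≤ w) (hsum : ∑ i, w i = 1) :
    ∃ c, w = Pi.single c 1 := by
  obtain ⟨c, -, hc⟩ : ∃ c ∈ univ, 0 < w c := by
    by_contra! h
    have := sum_nonpos h
    omega
  have hrest : ∑ i ∈ univ.erase c, w i = 1 - w c := by
    rw [← add_sum_erase _ _ (mem_univ c)] at hsum; omega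
  have hrest_nonneg : 0 ≤ ∑ i ∈ univ.erase c, w i := sum_nonneg fun i _ => hw i
  have hwc : w c = 1 := by omega
  refine ⟨c, funext fun i => ?_⟩
  rcases eq_or_ne i c with rfl | hic
  · simp [hwc]
  · rw [Pi.single_eq_of_ne hic]
    exact (sum_eq_zero_iff_of_nonneg fun i _ => hw i).1 (by omega) i
      (mem_erase.2 ⟨hic, mem_univ i⟩)

theorem exists_forall_ne_eq_zero_of_sum_le_one [Nonempty ι] {t : ι → ℤ} (ht : 0 ≤ t)
    (hsum : ∑ i, t i ≤ 1) : ∃ i₀, ∀ i ≠ i₀, t i = 0 := by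
  rcases (by have := sum_nonneg fun i (_ : i ∈ univ) => ht i; omega :
      ∑ i, t i = 0 ∨ ∑ i, t i = 1) with h0 | h1
  · exact ⟨Classical.arbitrary ι, fun i _ => (Fintype.sum_eq_zero_iff_of_nonneg ht).1 h0 ▸ rfl⟩
  · obtain ⟨c, rfl⟩ := exists_eq_single_of_sum_eq_one ht h1
    exact ⟨c, fun i hi => Pi.single_eq_of_ne hi 1⟩

theorem exists_eq_single_sub_single {v : ι → ℤ} {i₀ : ι} (hsum : ∑ i, v i = 0)
    (hv : ∀ i ≠ i₀, 0 ≤ v i) (hv₀ : -1 ≤ v i₀) :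
    ∃ c, v = Pi.single c 1 - Pi.single i₀ 1 := by
  have hw : 0 ≤ v + Pi.single i₀ 1 := fun i => by
    rcases eq_or_ne i i₀ with rfl | hi
    · simp; omega
    · simpa [Pi.single_eq_of_ne hi] using hv i hi
  obtain ⟨c, hc⟩ := exists_eq_single_of_sum_eq_one hw (by simp [sum_add_distrib, hsum])
  exact ⟨c, by rw [← hc, add_sub_cancel_right]⟩

end IntVectors

section ZeroColumnSumExtension

variable {n : ℕ}

@[simp]
theorem Mg_zero_right (g : Matrix (Fin n) (Fin n) ℤ) (i : Fin (n + 1)) : Mg g i 0 = 0 := by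
  simp [Mg]

@[simp]
theorem Mg_succ_succ (g : Matrix (Fin n) (Fin n) ℤ) (i j : Fin n) :
    Mg g i.succ j.succ = g i j := by
  simp [Mg, Fin.succ_ne_zero]

theorem Mg_zero_succ (g : Matrix (Fin n) (Fin n) ℤ) (j : Fin n) :
    Mg g 0 j.succ = -∑ k, g k j := by
  simp [Mg]

theorem sum_Mg_apply (g : Matrix (Fin n) (Fin n) ℤ) (j : Fin (n + 1)) :
    ∑ i, Mg g i j = 0 := by
  cases j using Fin.cases with
  | zero => simp
  | succ t => simp [Fin.sum_univ_succ, Mg_zero_succ]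

theorem Mg_injective : Function.Injective (Mg (n := n)) := fun g h hgh =>
  Matrix.ext fun i j => by simpa using congrFun₂ hgh i.succ j.succ

theorem eq_Mg_of (g : Matrix (Fin n) (Fin n) ℤ) {A : Matrix (Fin (n + 1)) (Fin (n + 1)) ℤ}
    (hsum : ∀ j, ∑ i, A i j = 0) (hzero : ∀ i, A i 0 = 0)
    (hblock : ∀ i j, A i.succ j.succ = g i j) : A = Mg g := by
  ext i j
  cases j using Fin.cases with
  | zero => simp [hzero]
  | succ t =>
    cases i using Fin.cases with
    | zero =>
      have h₁ := hsum t.succ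
      have h₂ := sum_Mg_apply g t.succ
      simp only [Fin.sum_univ_succ, hblock, Mg_succ_succ] at h₁ h₂
      omega
    | succ s => simp [hblock]

theorem Mg_permMat_col (σ : Equiv.Perm (Fin (n + 1))) (j : Fin (n + 1)) :
    (Mg (permMat σ)).col j = Pi.single (σ j) 1 - Pi.single (σ 0) 1 := by
  rw [← eq_Mg_of (A := Matrix.of fun i j =>
    (Pi.single (σ j) 1 - Pi.single (σ 0) 1 : Fin (n + 1) → ℤ) i)]
  · rfl
  · intro j; simp [sum_sub_distrib]
  · intro i; simp
  · intro i j; simp [permMat, Pi.single_apply, eq_comm]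

theorem Mg_col_injective {g : Matrix (Fin n) (Fin n) ℤ} (hg : IsUnit g) :
    Function.Injective (Mg g).col := by
  have hcols : (fun j i => (Mg g).col j i.succ) = Fin.cons 0 g.col := by
    ext j i
    cases j using Fin.cases <;> simp
  have hind := Matrix.linearIndependent_cols_of_isUnit hg
  have hcons : Function.Injective (Fin.cons 0 g.col : Fin (n + 1) → Fin n → ℤ) :=
    Fin.cons_injective_of_injective (fun ⟨j, hj⟩ => hind.ne_zero j hj) hind.injective
  rw [← hcols] at hcons
  exact fun a b hab => hcons (by simp only [hab])

end ZeroColumnSumExtension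

section NegMin

variable {κ : Type*} [Fintype κ] [Nonempty κ]

def negMin (v : κ → ℤ) : ℤ :=
  max 0 (-(univ.inf' univ_nonempty v))

theorem negMin_nonneg (v : κ → ℤ) : 0 ≤ negMin v :=
  le_max_left _ _

theorem negMin_le_iff {v : κ → ℤ} {m : ℤ} (hm : 0 ≤ m) : negMin v ≤ m ↔ ∀ j, -m ≤ v j := by
  simp [negMin, hm, neg_le, le_inf'_iff]

theorem neg_negMin_le (v : κ → ℤ) (j : κ) : -negMin v ≤ v j :=
  (negMin_le_iff (negMin_nonneg v)).1 le_rfl j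

theorem le_negMin_of_le {v : κ → ℤ} {m : ℤ} {j : κ} (h : v j ≤ -m) : m ≤ negMin v :=
  le_max_of_le_right (le_neg.1 ((inf'_le v (mem_univ j)).trans h))

end NegMin

theorem cremonaDeg_eq_sum_negMin {n : ℕ} (g : Matrix (Fin n) (Fin n) ℤ) :
    cremonaDeg g = ∑ i, negMin (Mg g i) :=
  rfl

theorem cremonaDeg_permMat {n : ℕ} (hn : 0 < n) (σ : Equiv.Perm (Fin (n + 1))) :
    cremonaDeg (permMat σ) = 1 := by
  have hentry (i j) : Mg (permMat σ) i j = (Pi.single (σ j) 1 - Pi.single (σ 0) 1 : _ → ℤ) i :=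
    congrFun (Mg_permMat_col σ j) i
  have hrow (i) : negMin (Mg (permMat σ) i) = (Pi.single (σ 0) 1 : _ → ℤ) i := by
    rcases eq_or_ne i (σ 0) with rfl | hi
    · rw [Pi.single_eq_same]
      refine le_antisymm ((negMin_le_iff zero_le_one).2 fun j => ?_)
        (le_negMin_of_le (j := Fin.succ ⟨0, hn⟩) ?_)
      · simp only [hentry, Pi.sub_apply, Pi.single_apply]
        split_ifs <;> norm_num
      · simp [hentry]
    · rw [Pi.single_eq_of_ne hi]
      refine le_antisymm ((negMin_le_iff le_rfl).2 fun j => ?_) (negMin_nonneg _)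
      simp only [hentry, Pi.sub_apply, Pi.single_apply, if_neg hi]
      split_ifs <;> norm_num
  simp [cremonaDeg_eq_sum_negMin, hrow]

theorem exists_Mg_col_eq_single_sub_single {n : ℕ} {g : Matrix (Fin n) (Fin n) ℤ}
    (hg : cremonaDeg g ≤ 1) :
    ∃ f : Fin (n + 1) → Fin (n + 1),
      ∀ j, (Mg g).col j = Pi.single (f j) 1 - Pi.single (f 0) 1 := by
  rw [cremonaDeg_eq_sum_negMin] at hg
  obtain ⟨i₀, hi₀⟩ := exists_forall_ne_eq_zero_of_sum_le_one (fun i => negMin_nonneg _) hg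
  have hcol (j) : ∃ c, (Mg g).col j = Pi.single c 1 - Pi.single i₀ 1 := by
    refine exists_eq_single_sub_single (sum_Mg_apply g j) (fun i hi => ?_) ?_
    · simpa [hi₀ i hi] using neg_negMin_le (Mg g i) j
    · have := single_le_sum (fun i _ => negMin_nonneg (Mg g i)) (mem_univ i₀)
      exact le_trans (by omega) (neg_negMin_le (Mg g i₀) j)
  choose f hf using hcol
  have hf₀ : f 0 = i₀ := by
    by_contra h
    simpa [Pi.single_apply, h] using congrFun (hf 0) (f 0)
  exact ⟨f, hf₀ ▸ hf⟩

theorem exists_eq_permMat_of_cremonaDeg_le_one {n : ℕ} {g : Matrix (Fin n) (Fin n) ℤ}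
    (hg : IsUnit g) (hdeg : cremonaDeg g ≤ 1) : ∃ σ, g = permMat σ := by
  obtain ⟨f, hf⟩ := exists_Mg_col_eq_single_sub_single hdeg
  have hinj : f.Injective := fun a b hab => Mg_col_injective hg (by rw [hf, hf, hab])
  let σ := Equiv.ofBijective f hinj.bijective_of_finite
  refine ⟨σ, Mg_injective (Matrix.ext fun i j => ?_)⟩
  exact (congrFun (hf j) i).trans (congrFun (Mg_permMat_col σ j) i).symm

/-- d(g) = 1 iff g lies in the embedded S_{n+1}; otherwise d(g) ≥ 2. -/
theorem stmt8 (n : ℕ) (hn : 2 ≤ n) (g : GL (Fin n) ℤ) :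
    (cremonaDeg (g : Matrix (Fin n) (Fin n) ℤ) = 1 ↔
        ∃ σ : Equiv.Perm (Fin (n + 1)), (g : Matrix (Fin n) (Fin n) ℤ) = permMat σ) ∧
      ((¬∃ σ : Equiv.Perm (Fin (n + 1)),
          (g : Matrix (Fin n) (Fin n) ℤ) = permMat σ) →
        2 ≤ cremonaDeg (g : Matrix (Fin n) (Fin n) ℤ)) := by
  have hperm := exists_eq_permMat_of_cremonaDeg_le_one (Units.isUnit g)
  refine ⟨⟨fun h => hperm h.le, ?_⟩, fun h => ?_⟩
  · rintro ⟨σ, hσ⟩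
    rw [hσ, cremonaDeg_permMat (by omega)]
  · by_contra! hlt
    exact h (hperm (by omega))
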